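/- For all φ, ψ ∈ L_CPL, the formula (Iφ ∧ Iψ) → I(φ ∨ ψ) is derivable in the proof system Log. -/
import Mathlib


/-- Formulas of classical propositional logic `L_CPL` over a countable set
of atomic propositions (represented by natural numbers). -/
inductive CPL : Type
  | top : CPL
  | atom : ℕ → CPL
  | neg : CPL → CPL
  | or : CPL → CPL → CPL
  | and : CPL → CPL → CPL
  deriving DecidableEq
/-- `Var(φ)`: the (finite) set of atomic propositions occurring in `φ`. -/
def CPL.var : CPL → Finset ℕ
  | .top => ∅
  | .atom p => {p}
  | .neg φ => φ.var
  | .or φ ψ => φ.var ∪ ψ.var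
  | .and φ ψ => φ.var ∪ ψ.var

/-- `p̄ := p ∨ ¬p`. -/
def pbar (p : ℕ) : CPL := .or (.atom p) (.neg (.atom p))

/-- Conjunction of a list of `L_CPL` formulas (empty conjunction is `⊤`). -/
def conjList : List CPL → CPL
  | [] => .top
  | [α] => α
  | α :: β :: rest => .and α (conjList (β :: rest))

/-- `φ̄ := ⋀_{p ∈ Var(φ)} (p ∨ ¬p)`, with the conjuncts taken in the fixed
(increasing) enumeration order of the atomic propositions. -/
def CPL.bar (φ : CPL) : CPL := conjList ((φ.var.sort (· ≤ ·)).map pbar)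
/-- Formulas of the language `L_Int`, extending `L_CPL` (embedded via `of`) by
negation, disjunction, conjunction, the global modality `⊞` (`box`) and the
intention modality `I` (`int`), which applies only to `L_CPL` formulas. -/
inductive Form : Type
  | of : CPL → Form
  | neg : Form → Form
  | or : Form → Form → Form
  | and : Form → Form → Form
  | box : Form → Form
  | int : CPL → Form
  deriving DecidableEq
/-- Material implication in `L_Int`: `φ → ψ := ¬φ ∨ ψ`. -/
def Form.imp (φ ψ : Form) : Form := .or (.neg φ) ψ

/-- Material biconditional in `L_Int`: `φ ↔ ψ := (φ → ψ) ∧ (ψ → φ)`. -/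
def Form.iff (φ ψ : Form) : Form := .and (φ.imp ψ) (ψ.imp φ)

/-- `⊥ := ¬⊤`. -/
def Form.bot : Form := .neg (.of .top)

/-- Boolean evaluation of `L_CPL` formulas under a valuation of the atoms. -/
def CPL.eval (v : ℕ → Bool) : CPL → Bool
  | .top => true
  | .atom p => v p
  | .neg φ => !φ.eval v
  | .or φ ψ => φ.eval v || ψ.eval v
  | .and φ ψ => φ.eval v && ψ.eval v

/-- Boolean evaluation of `L_Int` formulas, treating `⊞`- and `I`-formulas as
atoms (evaluated by `u`). -/
def Form.eval (v : ℕ → Bool) (u : Form → Bool) : Form → Bool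
  | .of α => α.eval v
  | .neg φ => !φ.eval v u
  | .or φ ψ => φ.eval v u || ψ.eval v u
  | .and φ ψ => φ.eval v u && ψ.eval v u
  | .box φ => u (.box φ)
  | .int α => u (.int α)

/-- Classical propositional tautologies of `L_Int` (with modal formulas
treated as atoms). -/
def Taut (φ : Form) : Prop := ∀ v u, φ.eval v u = true

/-- Derivability in the proof system `Log`: classical tautologies and Modus
Ponens; `S5` axioms and necessitation for `⊞`; and the intention axioms
Ax1: `I⊤`; Ax2: `Iφ → Iφ̄`; Ax3: `Iφ → ¬I¬φ`; Ax4: `(Iφ ∧ Iψ) ↔ I(φ ∧ ψ)`;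
Ax5: `⊞(ψ → φ) → ((Iψ ∧ Iφ̄) → Iφ)`. -/
inductive Deriv : Set Form → Form → Prop
  | prem {Γ : Set Form} {φ : Form} : φ ∈ Γ → Deriv Γ φ
  | taut {Γ : Set Form} {φ : Form} : Taut φ → Deriv Γ φ
  | mp {Γ : Set Form} {φ ψ : Form} :
      Deriv Γ (φ.imp ψ) → Deriv Γ φ → Deriv Γ ψ
  | boxK {Γ : Set Form} (φ ψ : Form) :
      Deriv Γ ((Form.box (φ.imp ψ)).imp ((Form.box φ).imp (Form.box ψ)))
  | boxT {Γ : Set Form} (φ : Form) : Deriv Γ ((Form.box φ).imp φ)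
  | box5 {Γ : Set Form} (φ : Form) :
      Deriv Γ ((Form.neg (Form.box φ)).imp (Form.box (Form.neg (Form.box φ))))
  | nec {Γ : Set Form} {φ : Form} : Deriv ∅ φ → Deriv Γ (Form.box φ)
  | ax1 {Γ : Set Form} : Deriv Γ (Form.int .top)
  | ax2 {Γ : Set Form} (α : CPL) :
      Deriv Γ ((Form.int α).imp (Form.int α.bar))
  | ax3 {Γ : Set Form} (α : CPL) :
      Deriv Γ ((Form.int α).imp (Form.neg (Form.int (CPL.neg α))))
  | ax4 {Γ : Set Form} (α β : CPL) :
      Deriv Γ ((Form.and (.int α) (.int β)).iff (Form.int (.and α β)))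
  | ax5 {Γ : Set Form} (α β : CPL) :
      Deriv Γ ((Form.box ((Form.of β).imp (Form.of α))).imp
        ((Form.and (.int β) (.int α.bar)).imp (Form.int α)))

/-- A set of formulas is `Log`-consistent if `⊥` is not derivable from it. -/
def LogConsistent (Γ : Set Form) : Prop := ¬ Deriv Γ Form.bot

/-- A maximally `Log`-consistent set: consistent with no proper consistent
extension. -/
def MCS (Γ : Set Form) : Prop :=
  LogConsistent Γ ∧ ∀ Δ, LogConsistent Δ → Γ ⊆ Δ → Δ = Γ

lemma var_conjList_pbar : ∀ l : List ℕ, (conjList (l.map pbar)).var = l.toFinset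
  | [] => by simp [conjList, CPL.var]
  | [a] => by simp [conjList, pbar, CPL.var]
  | a :: b :: rest => by
    have ih := var_conjList_pbar (b :: rest)
    simp only [List.map_cons, conjList, CPL.var, pbar] at ih ⊢
    rw [ih]; ext x; simp; tauto

lemma bar_var (α : CPL) : α.bar.var = α.var := by
  rw [CPL.bar, var_conjList_pbar, Finset.sort_toFinset]

lemma bar_eq_of_var_eq {α β : CPL} (h : α.var = β.var) : α.bar = β.bar := by
  unfold CPL.bar; rw [h]

lemma key_bar (φ ψ : CPL) : (CPL.and φ.bar ψ.bar).bar = (CPL.or φ ψ).bar :=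
  bar_eq_of_var_eq (by simp [CPL.var, bar_var])

/-- For all `φ, ψ ∈ L_CPL`, the formula `(Iφ ∧ Iψ) → I(φ ∨ ψ)`
is derivable in `Log`. -/
theorem deriv_int_or (φ ψ : CPL) :
    Deriv ∅ ((Form.and (.int φ) (.int ψ)).imp (Form.int (.or φ ψ))) := by
  have h4 : Deriv ∅ ((Form.and (.int φ) (.int ψ)).imp (Form.int (.and φ ψ))) := by
    refine Deriv.mp (Deriv.taut ?_) (Deriv.ax4 φ ψ)
    intro v u
    simp only [Form.iff, Form.imp, Form.eval]
    generalize u (Form.int φ) = a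
    generalize u (Form.int ψ) = b
    generalize u (Form.int (CPL.and φ ψ)) = c
    revert a b c; decide
  have h2φ := Deriv.ax2 (Γ := (∅ : Set Form)) φ
  have h2ψ := Deriv.ax2 (Γ := (∅ : Set Form)) ψ
  have h4bar : Deriv ∅ ((Form.and (.int φ.bar) (.int ψ.bar)).imp
      (Form.int (.and φ.bar ψ.bar))) := by
    refine Deriv.mp (Deriv.taut ?_) (Deriv.ax4 φ.bar ψ.bar)
    intro v u
    simp only [Form.iff, Form.imp, Form.eval]
    generalize u (Form.int φ.bar) = a
    generalize u (Form.int ψ.bar) = b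
    generalize u (Form.int (CPL.and φ.bar ψ.bar)) = c
    revert a b c; decide
  have h2' : Deriv ∅ ((Form.int (.and φ.bar ψ.bar)).imp
      (Form.int (CPL.or φ ψ).bar)) := by
    have := Deriv.ax2 (Γ := (∅ : Set Form)) (CPL.and φ.bar ψ.bar)
    rwa [key_bar] at this
  have hnec : Deriv ∅ (Form.box ((Form.of (.and φ ψ)).imp (Form.of (.or φ ψ)))) := by
    refine Deriv.nec (Deriv.taut ?_)
    intro v u
    simp only [Form.imp, Form.eval, CPL.eval]
    generalize CPL.eval v φ = a
    generalize CPL.eval v ψ = b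
    revert a b; decide
  have h5 : Deriv ∅ ((Form.and (.int (.and φ ψ)) (.int (CPL.or φ ψ).bar)).imp
      (Form.int (.or φ ψ))) := Deriv.mp (Deriv.ax5 (.or φ ψ) (.and φ ψ)) hnec
  -- combine everything with one propositional tautology
  refine Deriv.mp (Deriv.mp (Deriv.mp (Deriv.mp (Deriv.mp (Deriv.mp
    (Deriv.taut ?_) h4) h2φ) h2ψ) h4bar) h2') h5
  intro v u
  simp only [Form.imp, Form.eval]
  generalize u (Form.int φ) = a
  generalize u (Form.int ψ) = b
  generalize u (Form.int (CPL.and φ ψ)) = c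
  generalize u (Form.int φ.bar) = d
  generalize u (Form.int ψ.bar) = e
  generalize u (Form.int (CPL.and φ.bar ψ.bar)) = f
  generalize u (Form.int (CPL.or φ ψ).bar) = g
  generalize u (Form.int (CPL.or φ ψ)) = i
  revert a b c d e f g i; decide
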